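/- arXiv:2302.09624 — 9 statements merged into one kernel-verified Lean document; each statement's English description precedes it below -/
import Mathlib

section
/- Let 0 < c < A < B. Define f_ternary(α) piecewise as in the ternary compressor tradeoff function and f_sto(α) = 1 - ((A+c)/(A-c))α for α ∈ [0,(A+c)/(2A)] and f_sto(α) = ((A-c)/(A+c))(1-α) for α ∈ [(A+c)/(2A),1]. Then f_ternary(α) ≥ f_sto(α) for all α ∈ [0,1], with strict inequality for α in the open interval ((A-c)/(2B), 1-(A+c)/(2B)). -/
theorem stmt2 (c A B : ℝ) (hc : 0 < c) (hcA : c < A) (hAB : A < B)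
    (fter fsto : ℝ → ℝ)
    (hfter : ∀ α : ℝ, fter α =
      if α ≤ (A - c) / (2 * B) then 1 - (A + c) / (A - c) * α
      else if α ≤ 1 - (A + c) / (2 * B) then 1 - c / B - α
      else (A - c) / (A + c) * (1 - α))
    (hfsto : ∀ α : ℝ, fsto α =
      if α ≤ (A + c) / (2 * A) then 1 - (A + c) / (A - c) * α
      else (A - c) / (A + c) * (1 - α)) :
    (∀ α ∈ Set.Icc (0 : ℝ) 1, fsto α ≤ fter α) ∧
    (∀ α ∈ Set.Ioo ((A - c) / (2 * B)) (1 - (A + c) / (2 * B)), fsto α < fter α) := by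
  have hA : 0 < A := hc.trans hcA
  have hB : 0 < B := hA.trans hAB
  have hac : 0 < A - c := sub_pos.mpr hcA
  have hapc : 0 < A + c := by linarith
  -- line1 ≤ middle for α ≥ (A-c)/(2B)
  have key1 : ∀ α : ℝ, (1 - c / B - α) - (1 - (A + c) / (A - c) * α)
      = (c * (α * (2 * B) - (A - c))) / ((A - c) * B) := by
    intro α; field_simp; ring
  have L1 : ∀ α : ℝ, (A - c) / (2 * B) ≤ α → 1 - (A + c) / (A - c) * α ≤ 1 - c / B - α := by
    intro α hα
    rw [div_le_iff₀ (by positivity)] at hα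
    have h0 : 0 ≤ (c * (α * (2 * B) - (A - c))) / ((A - c) * B) := by
      apply div_nonneg _ (by positivity); nlinarith
    linarith [key1 α]
  have L1s : ∀ α : ℝ, (A - c) / (2 * B) < α → 1 - (A + c) / (A - c) * α < 1 - c / B - α := by
    intro α hα
    rw [div_lt_iff₀ (by positivity)] at hα
    have h0 : 0 < (c * (α * (2 * B) - (A - c))) / ((A - c) * B) := by
      apply div_pos _ (by positivity); nlinarith
    linarith [key1 α]
  -- line2 ≤ middle for α ≤ 1 - (A+c)/(2B)
  have key2 : ∀ α : ℝ, (1 - c / B - α) - (A - c) / (A + c) * (1 - α)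
      = (c * ((1 - α) * (2 * B) - (A + c))) / ((A + c) * B) := by
    intro α; field_simp; ring
  have L2 : ∀ α : ℝ, α ≤ 1 - (A + c) / (2 * B) → (A - c) / (A + c) * (1 - α) ≤ 1 - c / B - α := by
    intro α hα
    have hα' : (A + c) / (2 * B) ≤ 1 - α := by linarith
    rw [div_le_iff₀ (by positivity)] at hα'
    have h0 : 0 ≤ (c * ((1 - α) * (2 * B) - (A + c))) / ((A + c) * B) := by
      apply div_nonneg _ (by positivity); nlinarith
    linarith [key2 α]
  have L2s : ∀ α : ℝ, α < 1 - (A + c) / (2 * B) → (A - c) / (A + c) * (1 - α) < 1 - c / B - α := by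
    intro α hα
    have hα' : (A + c) / (2 * B) < 1 - α := by linarith
    rw [div_lt_iff₀ (by positivity)] at hα'
    have h0 : 0 < (c * ((1 - α) * (2 * B) - (A + c))) / ((A + c) * B) := by
      apply div_pos _ (by positivity); nlinarith
    linarith [key2 α]
  -- line1 ≤ line2 for α ≥ (A-c)/(2A)
  have key3 : ∀ α : ℝ, (A - c) / (A + c) * (1 - α) - (1 - (A + c) / (A - c) * α)
      = (2 * c * (α * (2 * A) - (A - c))) / ((A + c) * (A - c)) := by
    intro α; field_simp; ring
  have L3 : ∀ α : ℝ, (A - c) / (2 * A) ≤ α →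
      1 - (A + c) / (A - c) * α ≤ (A - c) / (A + c) * (1 - α) := by
    intro α hα
    rw [div_le_iff₀ (by positivity)] at hα
    have h0 : 0 ≤ (2 * c * (α * (2 * A) - (A - c))) / ((A + c) * (A - c)) := by
      apply div_nonneg _ (by positivity); nlinarith
    linarith [key3 α]
  -- breakpoint comparisons
  have hb1 : (A - c) / (2 * B) < (A + c) / (2 * A) := by
    rw [div_lt_div_iff₀ (by positivity) (by positivity)]; nlinarith
  have hb2 : (A - c) / (2 * A) < 1 - (A + c) / (2 * B) := by
    rw [div_lt_iff₀ (by positivity)]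
    have : (A + c) / (2 * B) < (A + c) / (2 * A) := by
      rw [div_lt_div_iff₀ (by positivity) (by positivity)]; nlinarith
    have h2 : (A + c) / (2 * A) * (2 * A) = A + c := by field_simp
    nlinarith
  constructor
  · intro α _
    rw [hfter α, hfsto α]
    by_cases h1 : α ≤ (A - c) / (2 * B)
    · rw [if_pos h1, if_pos (h1.trans hb1.le)]
    · rw [if_neg h1]
      push_neg at h1
      by_cases h2 : α ≤ 1 - (A + c) / (2 * B)
      · rw [if_pos h2]
        by_cases h3 : α ≤ (A + c) / (2 * A)
        · rw [if_pos h3]; exact L1 α h1.le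
        · rw [if_neg h3]; exact L2 α h2
      · rw [if_neg h2]
        push_neg at h2
        by_cases h3 : α ≤ (A + c) / (2 * A)
        · rw [if_pos h3]
          exact L3 α (le_of_lt (hb2.trans h2))
        · rw [if_neg h3]
  · intro α hα
    obtain ⟨ha, hb⟩ := hα
    rw [hfter α, hfsto α, if_neg (not_le.mpr ha), if_pos hb.le]
    by_cases h3 : α ≤ (A + c) / (2 * A)
    · rw [if_pos h3]; exact L1s α ha
    · rw [if_neg h3]; exact L2s α hb
end

section
/- Let X = x + Binom(M,p) and Y = x' + Binom(M,p) where x > x' are integers with 0 ≤ x' < x ≤ M (shifts), and 0 < p < 1. Then the likelihood ratio k ↦ P(Y = k)/P(X = k) is strictly decreasing in k on the common support {x, x+1, ..., x' + M}. -/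
/-- The binomial probability mass function `P(Binom(M,p) = k)`. -/
noncomputable def binomPMF (M : ℕ) (p : ℝ) (k : ℕ) : ℝ :=
  (M.choose k : ℝ) * p ^ k * (1 - p) ^ (M - k)

lemma binomPMF_pos (M : ℕ) (p : ℝ) (hp : 0 < p) (hp1 : p < 1) {j : ℕ} (hj : j ≤ M) :
    0 < binomPMF M p j := by
  have hC : (0 : ℝ) < (M.choose j : ℝ) := by exact_mod_cast Nat.choose_pos hj
  have hq : 0 < 1 - p := by linarith
  unfold binomPMF
  positivity

lemma choose_aux (M a b : ℕ) (hab : a < b) (hbM : b + 1 ≤ M) :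
    M.choose (b + 1) * M.choose a < M.choose b * M.choose (a + 1) := by
  have hCa : 0 < M.choose a := Nat.choose_pos (by omega)
  have hCb : 0 < M.choose b := Nat.choose_pos (by omega)
  have e1 : M.choose (b + 1) * (b + 1) = M.choose b * (M - b) :=
    Nat.choose_succ_right_eq M b
  have e2 : M.choose (a + 1) * (a + 1) = M.choose a * (M - a) :=
    Nat.choose_succ_right_eq M a
  have key : (M - b) * (a + 1) < (M - a) * (b + 1) := by
    zify [show b ≤ M by omega, show a ≤ M by omega]
    nlinarith [hab, hbM]
  refine lt_of_mul_lt_mul_right (a := (b + 1) * (a + 1)) ?_ (by positivity)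
  have L : M.choose (b + 1) * M.choose a * ((b + 1) * (a + 1))
      = M.choose b * M.choose a * ((M - b) * (a + 1)) := by
    rw [show M.choose (b + 1) * M.choose a * ((b + 1) * (a + 1))
        = (M.choose (b + 1) * (b + 1)) * (M.choose a * (a + 1)) from by ring, e1]
    ring
  have R : M.choose b * M.choose (a + 1) * ((b + 1) * (a + 1))
      = M.choose b * M.choose a * ((M - a) * (b + 1)) := by
    rw [show M.choose b * M.choose (a + 1) * ((b + 1) * (a + 1))
        = (M.choose (a + 1) * (a + 1)) * (M.choose b * (b + 1)) from by ring, e2]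
    ring
  rw [L, R]
  exact mul_lt_mul_of_pos_left key (by positivity)

theorem stmt3 (M x x' : ℕ) (p : ℝ) (hp : 0 < p) (hp1 : p < 1)
    (hxx : x' < x) (hxM : x ≤ M) :
    ∀ k : ℕ, x ≤ k → k + 1 ≤ x' + M →
      binomPMF M p (k + 1 - x') / binomPMF M p (k + 1 - x)
        < binomPMF M p (k - x') / binomPMF M p (k - x) := by
  intro k hk hk2
  set a := k - x with ha
  set b := k - x' with hb
  have hxk : x' ≤ k := by omega
  have h1 : k + 1 - x = a + 1 := by omega
  have h2 : k + 1 - x' = b + 1 := by omega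
  have hab : a < b := by omega
  have hbM : b + 1 ≤ M := by omega
  have haM : a + 1 ≤ M := by omega
  rw [h1, h2]
  have hd1 : 0 < binomPMF M p (a + 1) := binomPMF_pos M p hp hp1 haM
  have hd2 : 0 < binomPMF M p a := binomPMF_pos M p hp hp1 (by omega)
  rw [div_lt_div_iff₀ hd1 hd2]
  have key := choose_aux M a b hab hbM
  have hlt : ((M.choose (b + 1) * M.choose a : ℕ) : ℝ)
      < ((M.choose b * M.choose (a + 1) : ℕ) : ℝ) := by exact_mod_cast key
  have hq : (0 : ℝ) < 1 - p := by linarith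
  have E : M - (b + 1) + (M - a) = M - b + (M - (a + 1)) := by omega
  unfold binomPMF
  calc (M.choose (b + 1) : ℝ) * p ^ (b + 1) * (1 - p) ^ (M - (b + 1))
        * ((M.choose a : ℝ) * p ^ a * (1 - p) ^ (M - a))
      = ((M.choose (b + 1) * M.choose a : ℕ) : ℝ)
          * (p ^ (b + 1 + a) * (1 - p) ^ (M - (b + 1) + (M - a))) := by
        push_cast; ring
    _ < ((M.choose b * M.choose (a + 1) : ℕ) : ℝ)
          * (p ^ (b + 1 + a) * (1 - p) ^ (M - (b + 1) + (M - a))) := by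
        exact mul_lt_mul_of_pos_right hlt (by positivity)
    _ = (M.choose b : ℝ) * p ^ b * (1 - p) ^ (M - b)
          * ((M.choose (a + 1) : ℝ) * p ^ (a + 1) * (1 - p) ^ (M - (a + 1))) := by
        rw [E]; push_cast; ring
end

section
/- For a Poisson binomial random variable Z (a sum of independent Bernoulli random variables with possibly different success probabilities p_1,...,p_n ∈ (0,1)), the probability mass function is strictly log-concave on its support: P(Z=k+1)·P(Z=k-1) < (P(Z=k))^2 for all k with 1 ≤ k ≤ n-1. -/
/-- PMF of a Poisson binomial random variable: the sum of `n` independent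
Bernoulli random variables with success probabilities `p i`. -/
noncomputable def poissonBinomPMF (n : ℕ) (p : Fin n → ℝ) (k : ℕ) : ℝ :=
  ∑ S ∈ Finset.univ.powersetCard k, (∏ i ∈ S, p i) * ∏ i ∈ Sᶜ, (1 - p i)

/-! The PMF is the coefficient sequence of `∏ i, (p i X + (1 - p i))`. Multiplying a polynomial
whose coefficients are positive up to its degree and strictly log-concave by a linear factor
`a X + b` with `a, b > 0` preserves both properties: the new quadratic defect is a positive
combination of the old defects and of the "three-step" defect `u₁u₂ - u₃u₀`, which is
nonnegative for log-concave sequences without internal zeros. Induct over the factors. -/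

open Finset

namespace Polynomial

section Expansion

variable {R ι : Type*} [CommSemiring R]

theorem coeff_prod_linear [DecidableEq ι] (s : Finset ι) (a b : ι → R) (k : ℕ) :
    (∏ i ∈ s, (C (a i) * X + C (b i))).coeff k =
      ∑ S ∈ s.powersetCard k, (∏ i ∈ S, a i) * ∏ i ∈ s \ S, b i := by
  have hterm : ∀ S : Finset ι, (∏ i ∈ S, C (a i) * X) * ∏ i ∈ s \ S, C (b i) =
      C ((∏ i ∈ S, a i) * ∏ i ∈ s \ S, b i) * X ^ S.card := by
    intro S
    rw [prod_mul_distrib, prod_const, ← map_prod, ← map_prod, C_mul]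
    ring
  simp only [prod_add, hterm, finsetSum_coeff, coeff_C_mul_X_pow, powersetCard_eq_filter,
    sum_filter, eq_comm]

theorem coeff_linear_mul_zero (a b : R) (f : R[X]) :
    ((C a * X + C b) * f).coeff 0 = b * f.coeff 0 := by
  simp [add_mul, mul_assoc]

theorem coeff_linear_mul_succ (a b : R) (f : R[X]) (k : ℕ) :
    ((C a * X + C b) * f).coeff (k + 1) = a * f.coeff k + b * f.coeff (k + 1) := by
  simp [add_mul, mul_assoc, coeff_X_mul]

theorem linear_ne_zero {a : R} (b : R) (ha : a ≠ 0) : C a * X + C b ≠ 0 := fun h => by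
  simpa [h] using natDegree_linear (b := b) ha

theorem natDegree_linear_mul [NoZeroDivisors R] {a : R} (b : R) {f : R[X]} (ha : a ≠ 0)
    (hf : f ≠ 0) : ((C a * X + C b) * f).natDegree = f.natDegree + 1 := by
  rw [natDegree_mul (linear_ne_zero b ha) hf, natDegree_linear ha, add_comm]

theorem natDegree_prod_linear [NoZeroDivisors R] (s : Finset ι) {a : ι → R}
    (b : ι → R) (ha : ∀ i ∈ s, a i ≠ 0) : (∏ i ∈ s, (C (a i) * X + C (b i))).natDegree = #s := by
  rw [natDegree_prod _ _ fun i hi => linear_ne_zero (b i) (ha i hi),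
    sum_congr rfl fun i hi => natDegree_linear (ha i hi), card_eq_sum_ones]

end Expansion

variable {R : Type*} [CommRing R] [LinearOrder R]

def CoeffsPos (f : R[X]) : Prop :=
  ∀ k ≤ f.natDegree, 0 < f.coeff k

def CoeffsStrictLogConcave (f : R[X]) : Prop :=
  ∀ k, k + 2 ≤ f.natDegree → f.coeff (k + 2) * f.coeff k < f.coeff (k + 1) ^ 2

variable {f : R[X]}

theorem CoeffsPos.coeff_nonneg (hf : f.CoeffsPos) (k : ℕ) : 0 ≤ f.coeff k := by
  rcases le_or_gt k f.natDegree with hk | hk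
  · exact (hf k hk).le
  · rw [coeff_eq_zero_of_natDegree_lt hk]

theorem CoeffsPos.ne_zero (hf : f.CoeffsPos) : f ≠ 0 := by
  rintro rfl
  simpa using hf 0 le_rfl

variable [IsStrictOrderedRing R]

theorem CoeffsStrictLogConcave.coeff_mul_coeff_le_sq (hf : f.CoeffsStrictLogConcave) (k : ℕ) :
    f.coeff (k + 2) * f.coeff k ≤ f.coeff (k + 1) ^ 2 := by
  rcases le_or_gt (k + 2) f.natDegree with hk | hk
  · exact (hf k hk).le
  · rw [coeff_eq_zero_of_natDegree_lt hk, zero_mul]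
    positivity

theorem CoeffsStrictLogConcave.coeff_mul_coeff_le_mul (hlc : f.CoeffsStrictLogConcave)
    (hpos : f.CoeffsPos) (k : ℕ) :
    f.coeff (k + 3) * f.coeff k ≤ f.coeff (k + 1) * f.coeff (k + 2) := by
  rcases le_or_gt (k + 3) f.natDegree with hk | hk
  · have h₁ := hpos (k + 1) (by omega)
    have h₂ := hpos (k + 2) (by omega)
    have hprod := mul_le_mul (hlc.coeff_mul_coeff_le_sq k) (hlc.coeff_mul_coeff_le_sq (k + 1))
      (mul_nonneg (hpos.coeff_nonneg _) (hpos.coeff_nonneg _)) (sq_nonneg _)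
    refine le_of_mul_le_mul_right ?_ (mul_pos h₁ h₂)
    linarith
  · rw [coeff_eq_zero_of_natDegree_lt hk, zero_mul]
    exact mul_nonneg (hpos.coeff_nonneg _) (hpos.coeff_nonneg _)

section LinearFactor

variable {a b : R}

theorem CoeffsPos.linear_mul (hf : f.CoeffsPos) (ha : 0 < a) (hb : 0 < b) :
    ((C a * X + C b) * f).CoeffsPos := by
  intro k hk
  rw [natDegree_linear_mul _ ha.ne' hf.ne_zero] at hk
  rcases k with _ | k
  · rw [coeff_linear_mul_zero]
    exact mul_pos hb (hf 0 (Nat.zero_le _))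
  · rw [coeff_linear_mul_succ]
    exact add_pos_of_pos_of_nonneg (mul_pos ha (hf k (by omega)))
      (mul_nonneg hb.le (hf.coeff_nonneg _))

theorem CoeffsStrictLogConcave.linear_mul (hlc : f.CoeffsStrictLogConcave) (hpos : f.CoeffsPos)
    (ha : 0 < a) (hb : 0 < b) : ((C a * X + C b) * f).CoeffsStrictLogConcave := by
  intro k hk
  rw [natDegree_linear_mul _ ha.ne' hpos.ne_zero] at hk
  have hlc₀ := hlc.coeff_mul_coeff_le_sq
  rcases k with _ | k
  · rw [coeff_linear_mul_zero, coeff_linear_mul_succ, coeff_linear_mul_succ]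
    have h₀ := hpos 0 (Nat.zero_le _)
    nlinarith [mul_pos (mul_pos ha ha) (mul_pos h₀ h₀),
      mul_nonneg (mul_pos ha hb).le (mul_nonneg h₀.le (hpos.coeff_nonneg 1)),
      mul_nonneg (mul_pos hb hb).le (sub_nonneg.2 (hlc₀ 0))]
  · -- With `u = f.coeff` and `g` the product, `g (k+2) ^ 2 - g (k+3) * g (k+1)` equals
    -- `a² (u (k+1) ^ 2 - u (k+2) u k) + b² (u (k+2) ^ 2 - u (k+3) u (k+1))`
    -- `+ a b (u (k+1) u (k+2) - u (k+3) u k)`, and the first summand is positive.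
    rw [coeff_linear_mul_succ, coeff_linear_mul_succ, coeff_linear_mul_succ]
    nlinarith [mul_pos (mul_pos ha ha) (sub_pos.2 (hlc k (by omega))),
      mul_nonneg (mul_pos hb hb).le (sub_nonneg.2 (hlc₀ (k + 1))),
      mul_nonneg (mul_pos ha hb).le (sub_nonneg.2 (hlc.coeff_mul_coeff_le_mul hpos k))]

end LinearFactor

theorem coeffsPos_and_strictLogConcave_prod_linear {ι : Type*} (s : Finset ι) {a b : ι → R}
    (ha : ∀ i ∈ s, 0 < a i) (hb : ∀ i ∈ s, 0 < b i) :
    (∏ i ∈ s, (C (a i) * X + C (b i))).CoeffsPos ∧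
      (∏ i ∈ s, (C (a i) * X + C (b i))).CoeffsStrictLogConcave := by
  classical
  induction s using Finset.induction_on with
  | empty => exact ⟨fun k hk => by simp_all, fun k hk => by simp at hk⟩
  | insert i s hi ih =>
    obtain ⟨hpos, hlc⟩ := ih (fun j hj => ha j (mem_insert_of_mem hj))
      (fun j hj => hb j (mem_insert_of_mem hj))
    rw [prod_insert hi]
    exact ⟨hpos.linear_mul (ha i (mem_insert_self i s)) (hb i (mem_insert_self i s)),
      hlc.linear_mul hpos (ha i (mem_insert_self i s)) (hb i (mem_insert_self i s))⟩

end Polynomial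

open Polynomial

theorem poissonBinomPMF_eq_coeff (n : ℕ) (p : Fin n → ℝ) (k : ℕ) :
    poissonBinomPMF n p k = (∏ i, (C (p i) * X + C (1 - p i))).coeff k := by
  simp only [poissonBinomPMF, coeff_prod_linear, compl_eq_univ_sdiff]

theorem stmt5 (n : ℕ) (p : Fin n → ℝ) (hp : ∀ i, 0 < p i ∧ p i < 1) :
    ∀ k : ℕ, 1 ≤ k → k + 1 ≤ n →
      poissonBinomPMF n p (k + 1) * poissonBinomPMF n p (k - 1)
        < (poissonBinomPMF n p k) ^ 2 := by
  intro k hk₁ hkn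
  obtain ⟨j, rfl⟩ : ∃ j, k = j + 1 := ⟨k - 1, by omega⟩
  have hdeg : (∏ i, (C (p i) * X + C (1 - p i))).natDegree = n := by
    simpa using natDegree_prod_linear univ (fun i => 1 - p i) fun i _ => (hp i).1.ne'
  obtain ⟨-, hlc⟩ := coeffsPos_and_strictLogConcave_prod_linear univ
    (fun i _ => (hp i).1) (fun i _ => sub_pos.2 (hp i).2)
  simpa only [poissonBinomPMF_eq_coeff, Nat.add_sub_cancel] using hlc j (by omega)
end

section
/- Let Z be a Poisson binomial random variable with parameters p_1,...,p_{i-1},p_{i+1},...,p_N ∈ (0,1), and define X = Z + Bernoulli(p) and Y = Z + Bernoulli(p') (independent Bernoullis) with p, p' ∈ (0,1). Then P(Y=k+1)P(X=k) - P(Y=k)P(X=k+1) = [P(Z=k+1)P(Z=k-1) - (P(Z=k))^2](p - p'). Consequently if p > p' the likelihood ratio P(Y=k)/P(X=k) is decreasing in k, and if p < p' it is increasing in k. -/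
open Polynomial Finset


noncomputable def pbPoly (n : ℕ) (q : Fin n → ℝ) : ℝ[X] :=
  ∏ i, (C (q i) * X + C (1 - q i))

lemma pb_eq_coeff (n : ℕ) (q : Fin n → ℝ) (k : ℕ) :
    poissonBinomPMF n q k = (pbPoly n q).coeff k := by
  unfold pbPoly poissonBinomPMF
  rw [Fintype.prod_add]
  have h : ∀ t : Finset (Fin n),
      (∏ i ∈ t, (C (q i) * X)) * ∏ i ∈ tᶜ, C (1 - q i)
        = C ((∏ i ∈ t, q i) * ∏ i ∈ tᶜ, (1 - q i)) * X ^ t.card := by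
    intro t
    rw [Finset.prod_mul_distrib, Finset.prod_const, ← map_prod, ← map_prod, C_mul]
    ring
  simp only [h, finset_sum_coeff, coeff_C_mul, coeff_X_pow]
  rw [Finset.powersetCard_eq_filter, Finset.sum_filter]
  simp only [mul_ite, mul_one, mul_zero]
  congr 1
  ext t
  by_cases hc : t.card = k
  · rw [if_pos hc, if_pos hc.symm]
  · rw [if_neg hc, if_neg (fun h : k = t.card => hc h.symm)]

lemma pb_rec (n : ℕ) (q : Fin (n + 1) → ℝ) (k : ℕ) :
    poissonBinomPMF (n + 1) q k
      = poissonBinomPMF n (q ∘ Fin.castSucc) k * (1 - q (Fin.last n))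
        + (if k = 0 then 0 else poissonBinomPMF n (q ∘ Fin.castSucc) (k - 1))
            * q (Fin.last n) := by
  have hpoly : pbPoly (n + 1) q
      = pbPoly n (q ∘ Fin.castSucc) * (C (q (Fin.last n)) * X + C (1 - q (Fin.last n))) := by
    unfold pbPoly
    rw [Fin.prod_univ_castSucc]
    rfl
  simp only [pb_eq_coeff, hpoly]
  rw [mul_add, ← mul_assoc]
  cases k with
  | zero => simp [coeff_mul_X_zero, coeff_mul_C, mul_comm]
  | succ m =>
      simp only [coeff_add, coeff_mul_X, coeff_mul_C, Nat.succ_ne_zero, if_false,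
        Nat.add_sub_cancel]
      ring

lemma pb_nonneg (n : ℕ) (q : Fin n → ℝ) (hq : ∀ i, 0 < q i ∧ q i < 1) (k : ℕ) :
    0 ≤ poissonBinomPMF n q k := by
  apply Finset.sum_nonneg
  intro S _
  apply mul_nonneg
  · exact Finset.prod_nonneg fun i _ => (hq i).1.le
  · exact Finset.prod_nonneg fun i _ => by linarith [(hq i).2]

lemma pb_pos (n : ℕ) (q : Fin n → ℝ) (hq : ∀ i, 0 < q i ∧ q i < 1) (k : ℕ) (hk : k ≤ n) :
    0 < poissonBinomPMF n q k := by
  apply Finset.sum_pos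
  · intro S _
    apply mul_pos
    · exact Finset.prod_pos fun i _ => (hq i).1
    · exact Finset.prod_pos fun i _ => by linarith [(hq i).2]
  · rw [Finset.powersetCard_nonempty]
    simpa using hk

lemma pb_zero (n : ℕ) (q : Fin n → ℝ) (k : ℕ) (hk : n < k) : poissonBinomPMF n q k = 0 := by
  unfold poissonBinomPMF
  rw [Finset.powersetCard_eq_empty.2 (by simpa using hk), Finset.sum_empty]

lemma pb_logconcave : ∀ (n : ℕ) (q : Fin n → ℝ), (∀ i, 0 < q i ∧ q i < 1) →
    ∀ k : ℕ, 1 ≤ k → k + 1 ≤ n →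
      poissonBinomPMF n q (k + 1) * poissonBinomPMF n q (k - 1)
        < poissonBinomPMF n q k ^ 2 := by
  intro n
  induction n with
  | zero => intro q hq k hk hkn; omega
  | succ n ih =>
      intro q hq k hk hkn
      set r : Fin n → ℝ := q ∘ Fin.castSucc with hr
      have hqr : ∀ i, 0 < r i ∧ r i < 1 := fun i => hq _
      set t : ℝ := q (Fin.last n) with ht
      have ht0 : 0 < t := (hq _).1
      have ht1 : t < 1 := (hq _).2
      set g : ℕ → ℝ := poissonBinomPMF n r with hg
      have hgnn : ∀ j, 0 ≤ g j := pb_nonneg n r hqr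
      have hgpos : ∀ j, j ≤ n → 0 < g j := pb_pos n r hqr
      have hgzero : ∀ j, n < j → g j = 0 := pb_zero n r
      -- strict inequality for g at valid indices
      have hA : ∀ j, 1 ≤ j → j ≤ n → g (j + 1) * g (j - 1) < g j ^ 2 := by
        intro j hj1 hjn
        rcases lt_or_eq_of_le hjn with h | h
        · exact ih r hqr j hj1 (by omega)
        · subst h
          rw [hgzero (j + 1) (by omega), zero_mul]
          exact pow_pos (hgpos j le_rfl) 2
      rcases Nat.lt_or_ge k 2 with hk2 | hk2
      · -- k = 1
        have hk1 : k = 1 := by omega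
        subst hk1
        rw [pb_rec, pb_rec, pb_rec]
        simp only [← hr, ← ht, ← hg]
        norm_num
        have hB : g 2 * g 0 ≤ g 1 ^ 2 := by
          rcases Nat.lt_or_ge n 2 with hn | hn
          · rw [hgzero 2 (by omega), zero_mul]; positivity
          · exact (hA 1 le_rfl (by omega)).le
        have hg0 : 0 < g 0 := hgpos 0 (by omega)
        have h1 : (1 - t) ^ 2 * (g 2 * g 0 - g 1 ^ 2) ≤ 0 :=
          mul_nonpos_of_nonneg_of_nonpos (sq_nonneg _) (by linarith)
        have h2 : 0 ≤ t * (1 - t) * (g 1 * g 0) :=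
          mul_nonneg (mul_nonneg ht0.le (by linarith)) (mul_nonneg (hgnn 1) hg0.le)
        have h3 : 0 < t ^ 2 * g 0 ^ 2 := mul_pos (pow_pos ht0 2) (pow_pos hg0 2)
        nlinarith [h1, h2, h3]
      · -- k ≥ 2
        have hkn' : k ≤ n := by omega
        rw [pb_rec, pb_rec, pb_rec]
        simp only [← hr, ← ht, ← hg]
        rw [if_neg (by omega : ¬ k + 1 = 0), if_neg (by omega : ¬ k = 0),
          if_neg (by omega : ¬ k - 1 = 0)]
        have e1 : k + 1 - 1 = k := by omega
        have e2 : k - 1 - 1 = k - 2 := by omega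
        rw [e1, e2]
        have hAk : g (k + 1) * g (k - 1) - g k ^ 2 < 0 := by
          have := hA k (by omega) hkn'; linarith
        have hBk : g k * g (k - 2) - g (k - 1) ^ 2 < 0 := by
          have := hA (k - 1) (by omega) (by omega)
          have e3 : k - 1 + 1 = k := by omega
          rw [e3, e2] at this; linarith
        have hCk : g (k + 1) * g (k - 2) - g k * g (k - 1) ≤ 0 := by
          rcases Nat.lt_or_ge n (k + 1) with h | h
          · rw [hgzero (k + 1) h, zero_mul]
            exact sub_nonpos.2 (mul_nonneg (hgnn k) (hgnn (k - 1)))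
          · have hpk : 0 < g k := hgpos k hkn'
            have hpk1 : 0 < g (k - 1) := hgpos (k - 1) (by omega)
            have key : (g (k + 1) * g (k - 2)) * (g k * g (k - 1))
                ≤ (g k * g (k - 1)) * (g k * g (k - 1)) := by
              nlinarith [mul_nonneg (hgnn (k+1)) (hgnn (k-1)),
                mul_nonneg (hgnn k) (hgnn (k-2)), hgnn (k+1), hgnn (k-2), hgnn k, hgnn (k-1)]
            have := le_of_mul_le_mul_right key (mul_pos hpk hpk1)
            linarith
        have h1 : (1 - t) ^ 2 * (g (k + 1) * g (k - 1) - g k ^ 2) < 0 :=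
          mul_neg_of_pos_of_neg (pow_pos (by linarith) 2) hAk
        have h2 : t ^ 2 * (g k * g (k - 2) - g (k - 1) ^ 2) < 0 :=
          mul_neg_of_pos_of_neg (pow_pos ht0 2) hBk
        have h3 : t * (1 - t) * (g (k + 1) * g (k - 2) - g k * g (k - 1)) ≤ 0 :=
          mul_nonpos_of_nonneg_of_nonpos (by nlinarith) hCk
        nlinarith [h1, h2, h3]

theorem stmt6 (n : ℕ) (q : Fin n → ℝ) (hq : ∀ i, 0 < q i ∧ q i < 1)
    (p p' : ℝ) (hp : 0 < p) (hp1 : p < 1) (hp' : 0 < p') (hp'1 : p' < 1)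
    (PX PY : ℕ → ℝ)
    (hPX : ∀ k, PX k = poissonBinomPMF n q k * (1 - p)
      + (if k = 0 then 0 else poissonBinomPMF n q (k - 1)) * p)
    (hPY : ∀ k, PY k = poissonBinomPMF n q k * (1 - p')
      + (if k = 0 then 0 else poissonBinomPMF n q (k - 1)) * p') :
    (∀ k : ℕ, 1 ≤ k →
      PY (k + 1) * PX k - PY k * PX (k + 1)
        = (poissonBinomPMF n q (k + 1) * poissonBinomPMF n q (k - 1)
            - (poissonBinomPMF n q k) ^ 2) * (p - p')) ∧
    (∀ k : ℕ, 1 ≤ k → k + 1 ≤ n → p' < p → PY (k + 1) / PX (k + 1) < PY k / PX k) ∧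
    (∀ k : ℕ, 1 ≤ k → k + 1 ≤ n → p < p' → PY k / PX k < PY (k + 1) / PX (k + 1)) := by
  have key : ∀ k : ℕ, 1 ≤ k →
      PY (k + 1) * PX k - PY k * PX (k + 1)
        = (poissonBinomPMF n q (k + 1) * poissonBinomPMF n q (k - 1)
            - (poissonBinomPMF n q k) ^ 2) * (p - p') := by
    intro k hk
    rw [hPX k, hPX (k + 1), hPY k, hPY (k + 1),
      if_neg (by omega : ¬ k = 0), if_neg (by omega : ¬ k + 1 = 0)]
    have e1 : k + 1 - 1 = k := by omega
    rw [e1]; ring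
  have hPXpos : ∀ k : ℕ, k ≤ n → 0 < PX k := by
    intro k hkn
    rw [hPX k]
    have h1 := pb_pos n q hq k hkn
    have h2 : 0 ≤ (if k = 0 then 0 else poissonBinomPMF n q (k - 1)) := by
      split
      · exact le_refl 0
      · exact pb_nonneg n q hq _
    have h3 : 0 < poissonBinomPMF n q k * (1 - p) := mul_pos h1 (by linarith)
    have h4 : 0 ≤ (if k = 0 then 0 else poissonBinomPMF n q (k - 1)) * p :=
      mul_nonneg h2 hp.le
    linarith
  refine ⟨key, ?_, ?_⟩ <;> intro k hk hkn hpp'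
  · have hd : PY (k + 1) * PX k - PY k * PX (k + 1) < 0 := by
      rw [key k hk]
      exact mul_neg_of_neg_of_pos (by linarith [pb_logconcave n q hq k hk hkn]) (by linarith)
    rw [div_lt_div_iff₀ (hPXpos (k + 1) hkn) (hPXpos k (by omega))]
    linarith
  · have hd : 0 < PY (k + 1) * PX k - PY k * PX (k + 1) := by
      rw [key k hk]
      exact mul_pos_of_neg_of_neg (by linarith [pb_logconcave n q hq k hk hkn]) (by linarith)
    rw [div_lt_div_iff₀ (hPXpos k (by omega)) (hPXpos (k + 1) hkn)]
    linarith
end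

section
/- Let 0 < c < B and x ∈ [-c,c]. Let T be the random variable equal to sign(x) with probability |x|/B and 0 otherwise. Then for inputs x, x' ∈ [-c,c], the mechanism is (0, c/B)-differentially private, i.e., for every measurable event O, P(T_x ∈ O) ≤ P(T_{x'} ∈ O) + c/B. -/
/-- PMF of the `ternarize` compressor of Wen et al.: output `sign x` with
probability `|x|/B` and `0` otherwise. -/
noncomputable def pTernarize (B x : ℝ) (v : ℤ) : ℝ :=
  (if (v : ℝ) = Real.sign x then |x| / B else 0) + (if v = 0 then 1 - |x| / B else 0)

theorem stmt8 (c B : ℝ) (hc : 0 < c) (hcB : c < B)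
    (x x' : ℝ) (hx : |x| ≤ c) (hx' : |x'| ≤ c) :
    ∀ O : Finset ℤ, (∑ v ∈ O, pTernarize B x v) ≤ (∑ v ∈ O, pTernarize B x' v) + c / B := by
  intro O
  have hB : 0 < B := hc.trans hcB
  set T : Finset ℤ := {-1, 0, 1} with hT
  set g : ℤ → ℝ := fun v => max (pTernarize B x v - pTernarize B x' v) 0 with hg
  have hgz : ∀ v : ℤ, v ∉ T → g v = 0 := by
    intro v hv
    simp only [hT, Finset.mem_insert, Finset.mem_singleton] at hv
    push_neg at hv
    obtain ⟨h1, h2, h3⟩ := hv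
    have hz : ∀ y : ℝ, pTernarize B y v = 0 := by
      intro y
      have hs : (v : ℝ) ≠ Real.sign y := by
        rcases lt_trichotomy y 0 with h | h | h
        · rw [Real.sign_of_neg h]; exact_mod_cast h1
        · rw [h, Real.sign_zero]; exact_mod_cast h2
        · rw [Real.sign_of_pos h]; exact_mod_cast h3
      simp [pTernarize, hs, h2]
    simp [hg, hz]
  have step1 : ∑ v ∈ O, pTernarize B x v ≤
      ∑ v ∈ O, pTernarize B x' v + ∑ v ∈ O, g v := by
    rw [← Finset.sum_add_distrib]
    refine Finset.sum_le_sum fun v _ => ?_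
    have := le_max_left (pTernarize B x v - pTernarize B x' v) 0
    simp only [hg]
    linarith
  have step2 : ∑ v ∈ O, g v ≤ ∑ v ∈ T, g v := by
    have e1 : ∑ v ∈ O, g v = ∑ v ∈ O ∩ T, g v := by
      refine (Finset.sum_subset (Finset.inter_subset_left) ?_).symm
      intro v hvO hv
      exact hgz v fun hvT => hv (Finset.mem_inter.mpr ⟨hvO, hvT⟩)
    rw [e1]
    exact Finset.sum_le_sum_of_subset_of_nonneg Finset.inter_subset_right
      (fun v _ _ => le_max_right _ 0)
  have step3 : ∑ v ∈ T, g v ≤ c / B := by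
    have hsum : ∑ v ∈ T, g v = g (-1) + g 0 + g 1 := by
      simp [hT, Finset.sum_insert, add_assoc]
    rw [hsum]
    have hxc : |x| / B ≤ c / B := by gcongr
    have hxc' : |x'| / B ≤ c / B := by gcongr
    have ha : (0:ℝ) ≤ |x| / B := div_nonneg (abs_nonneg x) hB.le
    have ha' : (0:ℝ) ≤ |x'| / B := div_nonneg (abs_nonneg x') hB.le
    rcases lt_trichotomy x 0 with h | h | h <;>
      rcases lt_trichotomy x' 0 with h' | h' | h' <;>
      simp only [hg, pTernarize, Real.sign_of_neg, Real.sign_of_pos, Real.sign_zero, h, h',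
        abs_zero, zero_div, Int.cast_neg, Int.cast_one, Int.cast_zero] <;>
      norm_num <;>
      (try simp only [max_def, abs_of_nonneg ha, abs_of_nonneg ha']) <;>
      (try split_ifs) <;>
      linarith [div_pos hc hB]
  linarith
end

section
/- Let x ∈ [-c,c] and ε > 0. The mechanism outputting +1 with probability 1/2 + (x/(2c))·(e^ε-1)/(e^ε+1) and -1 with complementary probability satisfies ε-local differential privacy: for any x, x' ∈ [-c,c] and any output value v ∈ {-1,+1}, P(output = v | x) ≤ e^ε · P(output = v | x'). -/
theorem stmt9 (c ε : ℝ) (hc : 0 < c) (hε : 0 < ε)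
    (q : ℝ → ℤ → ℝ)
    (hq : ∀ x v, q x v =
      if v = 1 then 1 / 2 + x / (2 * c) * ((Real.exp ε - 1) / (Real.exp ε + 1))
      else 1 / 2 - x / (2 * c) * ((Real.exp ε - 1) / (Real.exp ε + 1))) :
    ∀ x ∈ Set.Icc (-c) c, ∀ x' ∈ Set.Icc (-c) c, ∀ v : ℤ, (v = 1 ∨ v = -1) →
      q x v ≤ Real.exp ε * q x' v := by
  intro x hx x' hx' v hv
  obtain ⟨hx1, hx2⟩ := hx
  obtain ⟨hx'1, hx'2⟩ := hx'
  have hE : 1 < Real.exp ε := by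
    have := Real.exp_lt_exp.mpr hε
    simpa using this
  have hE1 : (0:ℝ) < Real.exp ε + 1 := by linarith
  have h2c : (0:ℝ) < 2 * c := by linarith
  set E := Real.exp ε with hEdef
  set t : ℝ := (E - 1) / (E + 1) with htdef
  have ht : 0 < t := div_pos (by linarith) hE1
  have htE : t * (E + 1) = E - 1 := div_mul_cancel₀ _ (ne_of_gt hE1)
  set a := x / (2 * c) with hadef
  set a' := x' / (2 * c) with ha'def
  have ha1 : a ≤ 1 / 2 := by
    rw [hadef, div_le_iff₀ h2c]; linarith
  have ha2 : -(1 / 2) ≤ a := by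
    rw [hadef, le_div_iff₀ h2c]; linarith
  have ha'1 : a' ≤ 1 / 2 := by
    rw [ha'def, div_le_iff₀ h2c]; linarith
  have ha'2 : -(1 / 2) ≤ a' := by
    rw [ha'def, le_div_iff₀ h2c]; linarith
  rw [hq, hq]
  rcases hv with rfl | rfl
  · simp only [if_true]
    rw [show x / (2 * c) = a from rfl, show x' / (2 * c) = a' from rfl]
    nlinarith [mul_le_mul_of_nonneg_left ha'2 (le_of_lt (mul_pos ht (by linarith : (0:ℝ) < E)))]
  · norm_num
    rw [show x / (2 * c) = a from rfl, show x' / (2 * c) = a' from rfl]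
    nlinarith [mul_le_mul_of_nonneg_left ha'1 (le_of_lt (mul_pos ht (by linarith : (0:ℝ) < E)))]
end

section
/- Let 0 < c < A and x, x' ∈ [-c,c]. The two-level stochastic compressor outputting 1 with probability (A+x)/(2A) and -1 with probability (A-x)/(2A) satisfies ln((A+c)/(A-c))-local differential privacy: P(output = v | x) ≤ ((A+c)/(A-c)) · P(output = v | x') for v ∈ {-1,+1}, and this bound is attained when x = c, x' = -c, v = 1. -/
theorem stmt10 (c A : ℝ) (hc : 0 < c) (hcA : c < A)
    (q : ℝ → ℤ → ℝ)
    (hq : ∀ x v, q x v = if v = 1 then (A + x) / (2 * A) else (A - x) / (2 * A)) :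
    (∀ x ∈ Set.Icc (-c) c, ∀ x' ∈ Set.Icc (-c) c, ∀ v : ℤ, (v = 1 ∨ v = -1) →
      q x v ≤ (A + c) / (A - c) * q x' v) ∧
    q c 1 = (A + c) / (A - c) * q (-c) 1 := by
  have hA : (0:ℝ) < A := hc.trans hcA
  have hAc : (0:ℝ) < A - c := by linarith
  constructor
  · rintro x ⟨hx1, hx2⟩ x' ⟨hx'1, hx'2⟩ v (rfl | rfl)
    · rw [hq, hq]
      simp only [if_pos trivial]
      rw [div_mul_div_comm, div_le_div_iff₀ (by positivity) (by positivity)]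
      nlinarith [mul_nonneg hAc.le (show (0:ℝ) ≤ c - x by linarith), mul_nonneg (show (0:ℝ) ≤ A + c by linarith) (show (0:ℝ) ≤ x' + c by linarith)]
    · rw [hq, hq]
      norm_num
      rw [div_mul_div_comm, div_le_div_iff₀ (by positivity) (by positivity)]
      nlinarith [mul_nonneg (show (0:ℝ) ≤ A + c by linarith) (show (0:ℝ) ≤ c - x' by linarith), mul_nonneg hAc.le (show (0:ℝ) ≤ x + c by linarith), hA.le, mul_pos hA hA]
  · rw [hq, hq]
    simp only [if_pos trivial]
    rw [div_mul_div_comm]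
    rw [div_eq_div_iff (by positivity) (by positivity)]
    ring
end

section
/- If a mechanism is (ε,0)-differentially private, then its tradeoff function satisfies f(α) ≥ max{0, 1 - e^ε α, e^{-ε}(1-α)} for all α ∈ [0,1]. Conversely, if the tradeoff function of a mechanism satisfies f(α) ≥ max{0, 1-δ-e^ε α, e^{-ε}(1-δ-α)} for all α, then the mechanism is (ε,δ)-differentially private. -/
theorem stmt12 {Ω : Type*} [Fintype Ω] (P Q : Ω → ℝ)
    (hPnn : ∀ ω, 0 ≤ P ω) (hQnn : ∀ ω, 0 ≤ Q ω)
    (hPsum : ∑ ω, P ω = 1) (hQsum : ∑ ω, Q ω = 1)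
    (ε δ : ℝ) (hε : 0 ≤ ε) (hδ : 0 ≤ δ)
    (f : ℝ → ℝ)
    (hf : ∀ α, f α = sInf { β : ℝ | ∃ φ : Ω → ℝ,
        (∀ ω, 0 ≤ φ ω ∧ φ ω ≤ 1) ∧ (∑ ω, P ω * φ ω) ≤ α ∧
        β = 1 - ∑ ω, Q ω * φ ω }) :
    ((∀ O : Finset Ω, (∑ ω ∈ O, P ω) ≤ Real.exp ε * ∑ ω ∈ O, Q ω ∧
        (∑ ω ∈ O, Q ω) ≤ Real.exp ε * ∑ ω ∈ O, P ω) →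
      ∀ α ∈ Set.Icc (0 : ℝ) 1,
        f α ≥ max (max 0 (1 - Real.exp ε * α)) (Real.exp (-ε) * (1 - α))) ∧
    ((∀ α ∈ Set.Icc (0 : ℝ) 1,
        f α ≥ max (max 0 (1 - δ - Real.exp ε * α)) (Real.exp (-ε) * (1 - δ - α))) →
      ∀ O : Finset Ω, (∑ ω ∈ O, P ω) ≤ Real.exp ε * (∑ ω ∈ O, Q ω) + δ ∧
        (∑ ω ∈ O, Q ω) ≤ Real.exp ε * (∑ ω ∈ O, P ω) + δ) := by
  classical
  have hexp := Real.exp_pos ε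
  have hind : ∀ (g : Ω → ℝ) (S : Finset Ω),
      (∑ ω, g ω * (if ω ∈ S then (1:ℝ) else 0)) = ∑ ω ∈ S, g ω := by
    intro g S
    simp [mul_ite, Finset.sum_ite_mem]
  have hexpe : Real.exp (-ε) * Real.exp ε = 1 := by
    rw [← Real.exp_add]; simp
  have hQle1 : ∀ φ : Ω → ℝ, (∀ ω, 0 ≤ φ ω ∧ φ ω ≤ 1) → (∑ ω, Q ω * φ ω) ≤ 1 := by
    intro φ hφ
    calc (∑ ω, Q ω * φ ω) ≤ ∑ ω, Q ω := by
          apply Finset.sum_le_sum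
          intro ω _
          exact mul_le_of_le_one_right (hQnn ω) (hφ ω).2
      _ = 1 := hQsum
  have hbdd : ∀ α : ℝ, BddBelow { β : ℝ | ∃ φ : Ω → ℝ,
        (∀ ω, 0 ≤ φ ω ∧ φ ω ≤ 1) ∧ (∑ ω, P ω * φ ω) ≤ α ∧
        β = 1 - ∑ ω, Q ω * φ ω } := by
    intro α
    refine ⟨0, ?_⟩
    rintro β ⟨φ, hφ, _, rfl⟩
    have := hQle1 φ hφ
    linarith
  constructor
  · intro hDP α hα
    have hP1 : ∀ ω, P ω ≤ Real.exp ε * Q ω := by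
      intro ω
      have := (hDP {ω}).1
      simpa using this
    have hQ1 : ∀ ω, Q ω ≤ Real.exp ε * P ω := by
      intro ω
      have := (hDP {ω}).2
      simpa using this
    rw [hf]
    apply le_csInf
    · exact ⟨1 - ∑ ω, Q ω * (0:ℝ), fun _ => (0:ℝ), fun ω => ⟨le_refl 0, zero_le_one⟩,
        by simpa using hα.1, by simp⟩
    · rintro β ⟨φ, hφ, hPφ, rfl⟩
      apply max_le (max_le ?_ ?_) ?_
      · have := hQle1 φ hφ; linarith
      · -- ∑ Qφ ≤ e^ε ∑ Pφ ≤ e^ε α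
        have h1 : (∑ ω, Q ω * φ ω) ≤ ∑ ω, Real.exp ε * (P ω * φ ω) := by
          apply Finset.sum_le_sum
          intro ω _
          have := mul_le_mul_of_nonneg_right (hQ1 ω) (hφ ω).1
          linarith [this, mul_assoc (Real.exp ε) (P ω) (φ ω)]
        rw [← Finset.mul_sum] at h1
        have h2 : Real.exp ε * (∑ ω, P ω * φ ω) ≤ Real.exp ε * α :=
          mul_le_mul_of_nonneg_left hPφ hexp.le
        linarith
      · -- e^{-ε}(1-α) ≤ 1 - ∑ Qφ
        have h1 : (∑ ω, Real.exp (-ε) * (P ω * (1 - φ ω))) ≤ ∑ ω, Q ω * (1 - φ ω) := by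
          apply Finset.sum_le_sum
          intro ω _
          have h1φ : 0 ≤ 1 - φ ω := by linarith [(hφ ω).2]
          have hPQ : Real.exp (-ε) * P ω ≤ Q ω := by
            nlinarith [hP1 ω, Real.exp_pos (-ε), hQnn ω]
          nlinarith
        have e1 : (∑ ω, Q ω * (1 - φ ω)) = 1 - ∑ ω, Q ω * φ ω := by
          simp [mul_sub, Finset.sum_sub_distrib, hQsum]
        have e2 : (∑ ω, Real.exp (-ε) * (P ω * (1 - φ ω)))
            = Real.exp (-ε) * (1 - ∑ ω, P ω * φ ω) := by
          rw [← Finset.mul_sum]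
          congr 1
          simp [mul_sub, Finset.sum_sub_distrib, hPsum]
        rw [e1, e2] at h1
        have h2 : Real.exp (-ε) * (1 - α) ≤ Real.exp (-ε) * (1 - ∑ ω, P ω * φ ω) :=
          mul_le_mul_of_nonneg_left (by linarith) (Real.exp_pos (-ε)).le
        linarith
  · intro hb O
    have hPO0 : (0:ℝ) ≤ ∑ ω ∈ O, P ω := Finset.sum_nonneg fun ω _ => hPnn ω
    have hPO1 : (∑ ω ∈ O, P ω) ≤ 1 := by
      rw [← hPsum]
      exact Finset.sum_le_sum_of_subset_of_nonneg (Finset.subset_univ O)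
        (fun ω _ _ => hPnn ω)
    have hQO0 : (0:ℝ) ≤ ∑ ω ∈ O, Q ω := Finset.sum_nonneg fun ω _ => hQnn ω
    have hQO1 : (∑ ω ∈ O, Q ω) ≤ 1 := by
      rw [← hQsum]
      exact Finset.sum_le_sum_of_subset_of_nonneg (Finset.subset_univ O)
        (fun ω _ _ => hQnn ω)
    constructor
    · -- ∑_O P ≤ e^ε ∑_O Q + δ, via φ = indicator of Oᶜ, α = 1 - ∑_O P
      set α := 1 - ∑ ω ∈ O, P ω with hαdef
      have hα : α ∈ Set.Icc (0:ℝ) 1 := ⟨by simp [hαdef]; linarith, by simp [hαdef]; linarith⟩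
      have hmem : (1 - (1 - ∑ ω ∈ O, Q ω)) ∈ { β : ℝ | ∃ φ : Ω → ℝ,
          (∀ ω, 0 ≤ φ ω ∧ φ ω ≤ 1) ∧ (∑ ω, P ω * φ ω) ≤ α ∧
          β = 1 - ∑ ω, Q ω * φ ω } := by
        have hPc : (∑ ω ∈ Oᶜ, P ω) + ∑ ω ∈ O, P ω = 1 := by
          rw [Finset.sum_compl_add_sum]; exact hPsum
        have hQc : (∑ ω ∈ Oᶜ, Q ω) + ∑ ω ∈ O, Q ω = 1 := by
          rw [Finset.sum_compl_add_sum]; exact hQsum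
        refine ⟨fun ω => if ω ∈ Oᶜ then 1 else 0, fun ω => by by_cases h : ω ∈ Oᶜ <;> simp [h], ?_, ?_⟩
        · rw [hind P Oᶜ, hαdef]; linarith
        · rw [hind Q Oᶜ]; linarith
      have hle : f α ≤ 1 - (1 - ∑ ω ∈ O, Q ω) := by
        rw [hf]; exact csInf_le (hbdd α) hmem
      have hge := hb α hα
      have h3 : Real.exp (-ε) * (1 - δ - α) ≤ f α :=
        le_trans (le_max_right _ _) hge
      have h4 : Real.exp (-ε) * ((∑ ω ∈ O, P ω) - δ) ≤ ∑ ω ∈ O, Q ω := by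
        have : 1 - δ - α = (∑ ω ∈ O, P ω) - δ := by rw [hαdef]; ring
        rw [this] at h3
        linarith
      nlinarith [Real.exp_pos (-ε)]
    · -- ∑_O Q ≤ e^ε ∑_O P + δ, via φ = indicator of O, α = ∑_O P
      set α := ∑ ω ∈ O, P ω with hαdef
      have hα : α ∈ Set.Icc (0:ℝ) 1 := ⟨hPO0, hPO1⟩
      have hmem : (1 - ∑ ω ∈ O, Q ω) ∈ { β : ℝ | ∃ φ : Ω → ℝ,
          (∀ ω, 0 ≤ φ ω ∧ φ ω ≤ 1) ∧ (∑ ω, P ω * φ ω) ≤ α ∧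
          β = 1 - ∑ ω, Q ω * φ ω } := by
        refine ⟨fun ω => if ω ∈ O then 1 else 0, fun ω => by by_cases h : ω ∈ O <;> simp [h], ?_, ?_⟩
        · rw [hind P O]
        · rw [hind Q O]
      have hle : f α ≤ 1 - ∑ ω ∈ O, Q ω := by
        rw [hf]; exact csInf_le (hbdd α) hmem
      have hge := hb α hα
      have h3 : 1 - δ - Real.exp ε * α ≤ f α :=
        le_trans (le_trans (le_max_right _ _) (le_max_left _ _)) hge
      linarith
end

section
/- Let Z̃ ~ Binom(M, 1/2) and 0 < l ≤ M. Define β⁺(α) on α ∈ [P(Z̃ < k), P(Z̃ ≤ k)] for k ∈ {0,...,M-l} by β⁺(α) = P(Z̃ ≥ k+l) + (P(Z̃=k+l)/P(Z̃=k))·(P(Z̃ < k) - α), and β⁺(α) = 0 for α ≥ P(Z̃ ≤ M-l). Then β⁺ is a well-defined, continuous, non-increasing, convex function on [0,1]. -/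
open Finset

section UpperEnvelope

variable {α β : Type*}

theorem ConvexOn.finset_sup' {𝕜 E ι : Type*} [Semiring 𝕜] [PartialOrder 𝕜] [AddCommMonoid E]
    [AddCommMonoid β] [LinearOrder β] [IsOrderedAddMonoid β] [SMul 𝕜 E] [Module 𝕜 β]
    [PosSMulMono 𝕜 β] {t : Set E} {s : Finset ι} (hne : s.Nonempty) {f : ι → E → β}
    (hf : ∀ i ∈ s, ConvexOn 𝕜 t (f i)) : ConvexOn 𝕜 t fun x ↦ s.sup' hne (f · x) := by
  obtain ⟨i₀, hi₀⟩ := hne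
  refine ⟨(hf i₀ hi₀).1, fun x hx y hy a b ha hb hab ↦ sup'_le _ _ fun i hi ↦ ?_⟩
  calc f i (a • x + b • y) ≤ a • f i x + b • f i y := (hf i hi).2 hx hy ha hb hab
    _ ≤ a • s.sup' _ (f · x) + b • s.sup' _ (f · y) := by
      gcongr <;> exact le_sup' (f · _) hi

noncomputable def upperEnvelope [SemilatticeSup β] (f : ℕ → α → β) (n : ℕ) (x : α) : β :=
  (range (n + 1)).sup' nonempty_range_add_one fun j ↦ f j x

theorem upperEnvelope_eq_of_forall_le [SemilatticeSup β] {f : ℕ → α → β} {n k : ℕ} {x : α}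
    (hk : k ≤ n) (h : ∀ j ≤ n, f j x ≤ f k x) : upperEnvelope f n x = f k x :=
  le_antisymm (sup'_le _ _ fun j hj ↦ h j (by simpa [Nat.lt_succ_iff] using hj))
    (le_sup' (f · x) (mem_range.2 (Nat.lt_succ_of_le hk)))

theorem antitone_upperEnvelope [Preorder α] [SemilatticeSup β] {f : ℕ → α → β}
    (hf : ∀ j, Antitone (f j)) (n : ℕ) : Antitone (upperEnvelope f n) :=
  fun _ _ hxy ↦ sup'_le _ _ fun j hj ↦ (hf j hxy).trans (le_sup' (f · _) hj)

variable [Preorder α] [Preorder β] {f : ℕ → α → β} {s : ℕ → α} {n j k : ℕ} {x : α}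

theorem le_of_forall_le_succ_of_breakpoint_le (hs : Monotone s)
    (hf : ∀ j < n, s (j + 1) ≤ x → f j x ≤ f (j + 1) x)
    (hjk : j ≤ k) (hkn : k ≤ n) (hx : s k ≤ x) : f j x ≤ f k x := by
  induction k, hjk using Nat.le_induction with
  | base => exact le_rfl
  | succ k hjk ih =>
    exact (ih (by omega) ((hs k.le_succ).trans hx)).trans (hf k (by omega) hx)

theorem le_of_forall_succ_le_of_le_breakpoint (hs : Monotone s)
    (hf : ∀ j < n, x ≤ s (j + 1) → f (j + 1) x ≤ f j x)
    (hkj : k ≤ j) (hjn : j ≤ n) (hx : x ≤ s (k + 1)) : f j x ≤ f k x := by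
  induction j, hkj using Nat.le_induction with
  | base => exact le_rfl
  | succ j hkj ih =>
    exact (hf j (by omega) (hx.trans (hs (by omega)))).trans (ih (by omega))

end UpperEnvelope

section Binomial

variable {M : ℕ} {p : ℝ}

theorem binomPMF_nonneg (hp₀ : 0 ≤ p) (hp₁ : p ≤ 1) (k : ℕ) : 0 ≤ binomPMF M p k := by
  unfold binomPMF
  have : 0 ≤ 1 - p := by linarith
  positivity

theorem binomPMF_pos_s13 (hp₀ : 0 < p) (hp₁ : p < 1) {k : ℕ} (hk : k ≤ M) : 0 < binomPMF M p k := by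
  unfold binomPMF
  have : 0 < 1 - p := by linarith
  have := Nat.choose_pos hk
  positivity

theorem binomPMF_eq_zero_of_lt {k : ℕ} (hk : M < k) : binomPMF M p k = 0 := by
  simp [binomPMF, Nat.choose_eq_zero_of_lt hk]

theorem Nat.choose_add_one_add_mul_choose_le (M j l : ℕ) :
    M.choose (j + 1 + l) * M.choose j ≤ M.choose (j + l) * M.choose (j + 1) := by
  have hj := Nat.choose_succ_right_eq M j
  have hjl := Nat.choose_succ_right_eq M (j + l)
  refine Nat.le_of_mul_le_mul_right ?_ (by positivity : 0 < (j + l + 1) * (j + 1))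
  calc M.choose (j + 1 + l) * M.choose j * ((j + l + 1) * (j + 1))
      = M.choose (j + l) * M.choose j * ((M - (j + l)) * (j + 1)) := by
        rw [show j + 1 + l = j + l + 1 by omega]; linear_combination (M.choose j * (j + 1)) * hjl
    _ ≤ M.choose (j + l) * M.choose j * ((M - j) * (j + l + 1)) := by
        gcongr <;> omega
    _ = M.choose (j + l) * M.choose (j + 1) * ((j + l + 1) * (j + 1)) := by
        linear_combination (M.choose (j + l) * (j + l + 1)) * hj.symm

/-- Ratio form of the log-concavity of the binomial distribution. -/
theorem binomPMF_add_one_add_mul_le (hp₀ : 0 ≤ p) (hp₁ : p ≤ 1) (j l : ℕ) :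
    binomPMF M p (j + 1 + l) * binomPMF M p j ≤ binomPMF M p (j + l) * binomPMF M p (j + 1) := by
  rcases lt_or_ge M (j + 1 + l) with hM | hM
  · rw [binomPMF_eq_zero_of_lt hM, zero_mul]
    exact mul_nonneg (binomPMF_nonneg hp₀ hp₁ _) (binomPMF_nonneg hp₀ hp₁ _)
  have hpow : p ^ (j + 1 + l) * (1 - p) ^ (M - (j + 1 + l)) * (p ^ j * (1 - p) ^ (M - j))
      = p ^ (j + l) * (1 - p) ^ (M - (j + l)) * (p ^ (j + 1) * (1 - p) ^ (M - (j + 1))) := by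
    simp only [← pow_add, mul_mul_mul_comm]
    congr 2 <;> omega
  have hchoose : (M.choose (j + 1 + l) * M.choose j : ℝ) ≤ M.choose (j + l) * M.choose (j + 1) := by
    exact_mod_cast Nat.choose_add_one_add_mul_choose_le M j l
  calc binomPMF M p (j + 1 + l) * binomPMF M p j
      = (M.choose (j + 1 + l) * M.choose j : ℝ) *
          (p ^ (j + 1 + l) * (1 - p) ^ (M - (j + 1 + l)) * (p ^ j * (1 - p) ^ (M - j))) := by
        unfold binomPMF; ring
    _ ≤ (M.choose (j + l) * M.choose (j + 1) : ℝ) *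
          (p ^ (j + 1 + l) * (1 - p) ^ (M - (j + 1 + l)) * (p ^ j * (1 - p) ^ (M - j))) := by
        gcongr
    _ = binomPMF M p (j + l) * binomPMF M p (j + 1) := by
        rw [hpow]; unfold binomPMF; ring

end Binomial

namespace BinomialTradeoff

variable (M l : ℕ) (p : ℝ)

/-- `P(Z < k)` for `Z ~ Binom(M, p)`. -/
noncomputable def cdfLT (k : ℕ) : ℝ := ∑ j ∈ range k, binomPMF M p j

/-- `P(Z ≥ m)` for `Z ~ Binom(M, p)`. -/
noncomputable def tailGE (m : ℕ) : ℝ := ∑ j ∈ Icc m M, binomPMF M p j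

noncomputable def slope (k : ℕ) : ℝ := binomPMF M p (k + l) / binomPMF M p k

noncomputable def line (k : ℕ) (α : ℝ) : ℝ := tailGE M p (k + l) + slope M l p k * (cdfLT M p k - α)

noncomputable def curve : ℝ → ℝ := upperEnvelope (line M l p) (M - l + 1)

variable {M l p}

theorem monotone_cdfLT (hp₀ : 0 ≤ p) (hp₁ : p ≤ 1) : Monotone (cdfLT M p) := fun _ _ hab ↦
  sum_le_sum_of_subset_of_nonneg (range_subset_range.2 hab)
    fun j _ _ ↦ binomPMF_nonneg hp₀ hp₁ j

theorem tailGE_eq_add {m : ℕ} (hm : m ≤ M) : tailGE M p m = binomPMF M p m + tailGE M p (m + 1) := by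
  rw [tailGE, tailGE, ← add_sum_Ioc_eq_sum_Icc hm, Icc_add_one_left_eq_Ioc]

theorem slope_nonneg (hp₀ : 0 ≤ p) (hp₁ : p ≤ 1) (k : ℕ) : 0 ≤ slope M l p k :=
  div_nonneg (binomPMF_nonneg hp₀ hp₁ _) (binomPMF_nonneg hp₀ hp₁ _)

theorem antitone_slope (hp₀ : 0 < p) (hp₁ : p < 1) : Antitone (slope M l p) := by
  refine antitone_nat_of_succ_le fun j ↦ ?_
  rcases lt_or_ge M (j + 1) with hM | hM
  · rw [slope, binomPMF_eq_zero_of_lt (by omega : M < j + 1 + l), zero_div]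
    exact slope_nonneg hp₀.le hp₁.le j
  rw [slope, slope, div_le_div_iff₀ (binomPMF_pos_s13 hp₀ hp₁ hM) (binomPMF_pos_s13 hp₀ hp₁ (by omega))]
  exact binomPMF_add_one_add_mul_le hp₀.le hp₁.le j l

theorem line_sub_line_succ (hp₀ : 0 < p) (hp₁ : p < 1) {k : ℕ} (hk : k + l ≤ M) (α : ℝ) :
    line M l p k α - line M l p (k + 1) α
      = (slope M l p k - slope M l p (k + 1)) * (cdfLT M p (k + 1) - α) := by
  have hslope : slope M l p k * binomPMF M p k = binomPMF M p (k + l) :=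
    div_mul_cancel₀ _ (binomPMF_pos_s13 hp₀ hp₁ (by omega)).ne'
  rw [line, line, tailGE_eq_add hk, cdfLT, cdfLT, sum_range_succ, add_right_comm k 1 l]
  linear_combination -hslope

theorem line_le_line_succ (hp₀ : 0 < p) (hp₁ : p < 1) {k : ℕ} (hk : k + l ≤ M) {α : ℝ}
    (hα : cdfLT M p (k + 1) ≤ α) : line M l p k α ≤ line M l p (k + 1) α := by
  nlinarith [line_sub_line_succ hp₀ hp₁ hk α, antitone_slope (M := M) (l := l) hp₀ hp₁ k.le_succ]

theorem line_succ_le_line (hp₀ : 0 < p) (hp₁ : p < 1) {k : ℕ} (hk : k + l ≤ M) {α : ℝ}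
    (hα : α ≤ cdfLT M p (k + 1)) : line M l p (k + 1) α ≤ line M l p k α := by
  nlinarith [line_sub_line_succ hp₀ hp₁ hk α, antitone_slope (M := M) (l := l) hp₀ hp₁ k.le_succ]

theorem line_eq_zero_of_lt {k : ℕ} (hk : M < k + l) (α : ℝ) : line M l p k α = 0 := by
  rw [line, slope, tailGE, Icc_eq_empty_of_lt hk, binomPMF_eq_zero_of_lt hk]
  simp

theorem antitone_line (hp₀ : 0 ≤ p) (hp₁ : p ≤ 1) (k : ℕ) : Antitone (line M l p k) :=
  fun _ _ hab ↦ by unfold line; nlinarith [slope_nonneg (M := M) (l := l) hp₀ hp₁ k]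

theorem convexOn_line (k : ℕ) : ConvexOn ℝ Set.univ (line M l p k) := by
  refine ⟨convex_univ, fun x _ y _ a b _ _ hab ↦ le_of_eq ?_⟩
  simp only [line, smul_eq_mul]
  linear_combination (-(tailGE M p (k + l) + slope M l p k * cdfLT M p k)) * hab

theorem curve_eq_line (hp₀ : 0 < p) (hp₁ : p < 1) (hlM : l ≤ M) {k : ℕ} (hk : k ≤ M - l)
    {α : ℝ} (hα : α ∈ Set.Icc (cdfLT M p k) (cdfLT M p (k + 1))) :
    curve M l p α = line M l p k α := by
  refine upperEnvelope_eq_of_forall_le (by omega) fun j hj ↦ ?_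
  rcases le_total j k with hjk | hkj
  · exact le_of_forall_le_succ_of_breakpoint_le (monotone_cdfLT hp₀.le hp₁.le)
      (fun i (hi : i < k) ↦ line_le_line_succ hp₀ hp₁ (by omega)) hjk le_rfl hα.1
  · exact le_of_forall_succ_le_of_le_breakpoint (monotone_cdfLT hp₀.le hp₁.le)
      (fun i (hi : i < M - l + 1) ↦ line_succ_le_line hp₀ hp₁ (by omega)) hkj hj hα.2

theorem curve_eq_zero (hp₀ : 0 < p) (hp₁ : p < 1) (hlM : l ≤ M) {α : ℝ}
    (hα : cdfLT M p (M - l + 1) ≤ α) : curve M l p α = 0 := by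
  rw [curve, upperEnvelope_eq_of_forall_le le_rfl fun j hj ↦
    le_of_forall_le_succ_of_breakpoint_le (monotone_cdfLT hp₀.le hp₁.le)
      (fun i (hi : i < M - l + 1) ↦ line_le_line_succ hp₀ hp₁ (by omega)) hj le_rfl hα]
  exact line_eq_zero_of_lt (by omega) α

theorem continuous_curve : Continuous (curve M l p) := by
  refine Continuous.finset_sup'_apply nonempty_range_add_one fun k _ ↦ ?_
  unfold line; fun_prop

theorem antitone_curve (hp₀ : 0 ≤ p) (hp₁ : p ≤ 1) : Antitone (curve M l p) :=
  antitone_upperEnvelope (antitone_line hp₀ hp₁) _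

theorem convexOn_curve : ConvexOn ℝ Set.univ (curve M l p) :=
  ConvexOn.finset_sup' nonempty_range_add_one fun k _ ↦ convexOn_line k

end BinomialTradeoff

open BinomialTradeoff in
theorem stmt13_general (M l : ℕ) (hlM : l ≤ M) :
    ∃ β : ℝ → ℝ,
      (∀ k : ℕ, k ≤ M - l →
        ∀ α ∈ Set.Icc (∑ j ∈ Finset.range k, binomPMF M (1/2) j)
            (∑ j ∈ Finset.range (k + 1), binomPMF M (1/2) j),
          β α = (∑ j ∈ Finset.Icc (k + l) M, binomPMF M (1/2) j)
            + binomPMF M (1/2) (k + l) / binomPMF M (1/2) k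
              * ((∑ j ∈ Finset.range k, binomPMF M (1/2) j) - α)) ∧
      (∀ α ∈ Set.Icc (∑ j ∈ Finset.range (M - l + 1), binomPMF M (1/2) j) 1, β α = 0) ∧
      ContinuousOn β (Set.Icc 0 1) ∧ AntitoneOn β (Set.Icc 0 1) ∧
      ConvexOn ℝ (Set.Icc 0 1) β := by
  have hp₀ : (0 : ℝ) < 1 / 2 := by norm_num
  have hp₁ : (1 / 2 : ℝ) < 1 := by norm_num
  refine ⟨curve M l (1 / 2), fun k hk α hα ↦ curve_eq_line hp₀ hp₁ hlM hk hα,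
    fun α hα ↦ curve_eq_zero hp₀ hp₁ hlM hα.1, continuous_curve.continuousOn,
    (antitone_curve hp₀.le hp₁.le).antitoneOn _,
    convexOn_curve.subset (Set.subset_univ _) (convex_Icc 0 1)⟩

theorem stmt13 (M l : ℕ) (hl : 0 < l) (hlM : l ≤ M) :
    ∃ β : ℝ → ℝ,
      (∀ k : ℕ, k ≤ M - l →
        ∀ α ∈ Set.Icc (∑ j ∈ Finset.range k, binomPMF M (1/2) j)
            (∑ j ∈ Finset.range (k + 1), binomPMF M (1/2) j),
          β α = (∑ j ∈ Finset.Icc (k + l) M, binomPMF M (1/2) j)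
            + binomPMF M (1/2) (k + l) / binomPMF M (1/2) k
              * ((∑ j ∈ Finset.range k, binomPMF M (1/2) j) - α)) ∧
      (∀ α ∈ Set.Icc (∑ j ∈ Finset.range (M - l + 1), binomPMF M (1/2) j) 1, β α = 0) ∧
      ContinuousOn β (Set.Icc 0 1) ∧ AntitoneOn β (Set.Icc 0 1) ∧
      ConvexOn ℝ (Set.Icc 0 1) β :=
  stmt13_general M l hlM
end
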